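/- Let Γ be a quiver, X a topological space, and (T, f) the constant Γ-representation with T(i) = X for every vertex i and f_α = id_X for every arrow α. If Γ is connected and acyclic, then the Γ-limit chain complex lim^Γ(S^Γ(T, f)) is isomorphic to the singular chain complex S(X), and hence H_n(T, f) ≅ H_n(X) for all n ≥ 0. -/

import Mathlib

/- STATEMENT 13: For a connected acyclic quiver Γ and the constant top-representation
T(i) = X with identity arrow maps, the limit chain complex lim^Γ(S^Γ(T,f)) is
isomorphic to the singular chain complex S(X); hence Hₙ(T,f) ≅ Hₙ(X) for all n. -/

open CategoryTheory CategoryTheory.Limits AlgebraicTopology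

/-- The singular chain complex functor. -/
noncomputable def singularChainsFunctor : TopCat.{0} ⥤ ChainComplex AddCommGrpCat.{0} ℕ :=
  TopCat.toSSet ⋙ ((SimplicialObject.whiskering _ _).obj AddCommGrpCat.free) ⋙
    alternatingFaceMapComplex AddCommGrpCat.{0}

/-- A quiver is connected if its underlying undirected graph is connected. -/
def QuiverConnected (V : Type) [Quiver.{1} V] : Prop :=
  ∀ a b : V, Nonempty (@Quiver.Path (Quiver.Symmetrify V) _ a b)

/-- The constant top-representation of a quiver on a space `X`, all arrow maps being
the identity. -/
def constRep (V : Type) [Quiver.{1} V] (X : TopCat.{0}) : V ⥤q TopCat.{0} :=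
  ⟨fun _ => X, fun _ => 𝟙 X⟩

/- Every arrow of the diagram acts by the identity, so over the path category it is the constant
functor at `S(X)`; connectedness of the quiver makes the path category connected, and the limit of
a constant diagram over a connected category is its value. -/

namespace CategoryTheory.Paths

variable {V : Type} [Quiver.{1} V]

theorem isConnected_of_quiverConnected [Nonempty V] (hconn : QuiverConnected V) :
    IsConnected (Paths V) := by
  have : Nonempty (Paths V) := ‹Nonempty V›
  refine zigzag_isConnected fun a b => ?_
  obtain ⟨p⟩ := hconn a b
  induction p with
  | nil => rfl
  | cons _ e ih =>
    rcases e with e | e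
    · exact ih.trans (Zigzag.of_hom ((of V).map e))
    · exact ih.trans (Zigzag.of_inv ((of V).map e))

theorem lift_constRep_comp {C : Type*} [Category C] (X : TopCat.{0}) (F : TopCat.{0} ⥤ C) :
    lift (constRep V X ⋙q F.toPrefunctor) = (Functor.const (Paths V)).obj (F.obj X) :=
  (lift_unique (constRep V X ⋙q F.toPrefunctor) ((Functor.const (Paths V)).obj (F.obj X))
    (Prefunctor.ext (fun _ => rfl) fun _ _ _ => (F.map_id X).symm)).symm

end CategoryTheory.Paths

theorem limit_singularChains_constRep_general (V : Type) [Quiver.{1} V] [Nonempty V]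
    (hconn : QuiverConnected V)
    (X : TopCat.{0}) :
    Nonempty
      (limit (Paths.lift ((constRep V X) ⋙q singularChainsFunctor.toPrefunctor)) ≅
        singularChainsFunctor.obj X) ∧
    ∀ n : ℕ,
      Nonempty
        ((limit (Paths.lift ((constRep V X) ⋙q singularChainsFunctor.toPrefunctor))).homology n ≅
          (singularChainsFunctor.obj X).homology n) := by
  have := Paths.isConnected_of_quiverConnected hconn
  have e : limit (Paths.lift ((constRep V X) ⋙q singularChainsFunctor.toPrefunctor)) ≅
      singularChainsFunctor.obj X :=
    HasLimit.isoOfNatIso (eqToIso (Paths.lift_constRep_comp X _)) ≪≫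
      limit.isoLimitCone ⟨_, isLimitConstCone _ _⟩
  exact ⟨⟨e⟩, fun n => ⟨(HomologicalComplex.homologyFunctor _ _ n).mapIso e⟩⟩

theorem limit_singularChains_constRep (V : Type) [Quiver.{1} V] [Nonempty V]
    (hconn : QuiverConnected V)
    (hacyclic : ∀ (i : V) (p : Quiver.Path i i), p.length = 0)
    (X : TopCat.{0}) :
    Nonempty
      (limit (Paths.lift ((constRep V X) ⋙q singularChainsFunctor.toPrefunctor)) ≅
        singularChainsFunctor.obj X) ∧
    ∀ n : ℕ,
      Nonempty
        ((limit (Paths.lift ((constRep V X) ⋙q singularChainsFunctor.toPrefunctor))).homology n ≅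
          (singularChainsFunctor.obj X).homology n) :=
  limit_singularChains_constRep_general V hconn X
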